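/- Let n ≥ 2 be a natural number with (log₂ n)/n ≤ 1, let X_1, …, X_n be independent random variables each uniformly distributed on [0,1), and let I ⊆ [0,1) be a fixed subinterval of length (log₂ n)/n. Then the probability that at least 2·log₂ n of the points X_1, …, X_n lie in I is at most n^{−3/8}. -/

import Mathlib

/-!
The number of points in `[a, b)` is a sum of `n` independent indicators of mean `p = m / n`,
where `m = log₂ n`. The Chernoff bound at `t = log 2` gives
`P(count ≥ 2m) ≤ 2^(-2m) (1 + p)^n ≤ 2^(-2m) e^m = n^(1 / log 2 - 2)`,
and `1 / log 2 - 2 ≤ -3/8` because `log 2 ≥ 8/13`.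
-/

open MeasureTheory ProbabilityTheory Real

lemma exp_mul_indicator_one {Ω : Type*} {A : Set Ω} (t : ℝ) (ω : Ω) :
    exp (t * A.indicator 1 ω) = 1 + (exp t - 1) * A.indicator 1 ω := by
  by_cases h : ω ∈ A <;> simp [h]

section Chernoff

variable {Ω : Type*} [MeasurableSpace Ω] {P : Measure Ω} [IsProbabilityMeasure P]

lemma mgf_indicator_one {A : Set Ω} (hA : MeasurableSet A) (t : ℝ) :
    mgf (A.indicator 1) P t = 1 + (exp t - 1) * P.real A := by
  have hint : Integrable (A.indicator (1 : Ω → ℝ)) P := (integrable_const 1).indicator hA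
  simp_rw [mgf, exp_mul_indicator_one]
  rw [integral_add (integrable_const 1) (hint.const_mul _), integral_const_mul,
    integral_indicator_one hA]
  simp

lemma card_mem_eq_sum_indicator_one {ι α : Type*} [Fintype ι] (X : ι → α) (s : Set α) :
    (Nat.card {i // X i ∈ s} : ℝ) = ∑ i, s.indicator 1 (X i) := by
  classical
  rw [Nat.card_eq_fintype_card, Fintype.card_subtype, Finset.card_filter]
  push_cast
  simp [Set.indicator_apply]

theorem measureReal_card_mem_ge_le {ι α : Type*} [Fintype ι] [MeasurableSpace α]
    {X : ι → Ω → α} (hX : ∀ i, Measurable (X i)) (hindep : iIndepFun X P)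
    {s : Set α} (hs : MeasurableSet s) {p : ℝ} (hp : ∀ i, P.real (X i ⁻¹' s) = p)
    {t : ℝ} (ht : 0 ≤ t) (c : ℝ) :
    P.real {ω | c ≤ Nat.card {i // X i ω ∈ s}} ≤
      exp (-t * c) * (1 + (exp t - 1) * p) ^ Fintype.card ι := by
  set Y : ι → Ω → ℝ := fun i => (X i ⁻¹' s).indicator 1
  have hY : ∀ i, Measurable (Y i) := fun i => measurable_one.indicator (hX i hs)
  have hYindep : iIndepFun Y P :=
    hindep.comp (fun _ => s.indicator 1) fun _ => measurable_one.indicator hs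
  have hcount : ∀ ω, (Nat.card {i // X i ω ∈ s} : ℝ) = (∑ i, Y i) ω := by
    intro ω
    rw [card_mem_eq_sum_indicator_one, Finset.sum_apply]
    rfl
  have hint : Integrable (fun ω => exp (t * (∑ i, Y i) ω)) P :=
    hYindep.integrable_exp_mul_sum hY fun i _ => by
      simp_rw [Y, exp_mul_indicator_one]
      exact (integrable_const 1).add (((integrable_const 1).indicator (hX i hs)).const_mul _)
  simp_rw [hcount]
  calc P.real {ω | c ≤ (∑ i, Y i) ω} ≤ exp (-t * c) * mgf (∑ i, Y i) P t :=
        measure_ge_le_exp_mul_mgf c ht hint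
    _ = exp (-t * c) * (1 + (exp t - 1) * p) ^ Fintype.card ι := by
        simp [hYindep.mgf_sum hY, Y, mgf_indicator_one (hX _ hs), hp]

end Chernoff

lemma measureReal_preimage_Ico_of_map_eq_uniform {Ω : Type*} [MeasurableSpace Ω]
    {P : Measure Ω} {X : Ω → ℝ} (hX : Measurable X)
    (hunif : Measure.map X P = volume.restrict (Set.Ico 0 1)) {a b : ℝ}
    (ha : 0 ≤ a) (hab : a ≤ b) (hb : b ≤ 1) :
    P.real (X ⁻¹' Set.Ico a b) = b - a := by
  rw [measureReal_def, ← Measure.map_apply hX measurableSet_Ico, hunif,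
    Measure.restrict_apply measurableSet_Ico,
    Set.inter_eq_left.mpr (Set.Ico_subset_Ico ha hb), Real.volume_Ico,
    ENNReal.toReal_ofReal (sub_nonneg.mpr hab)]

lemma exp_neg_two_logb_mul_one_add_pow_le {n : ℕ} (hn : 1 ≤ n) :
    exp (-log 2 * (2 * logb 2 n)) * (1 + logb 2 n / n) ^ n ≤ (n : ℝ) ^ (-(3 / 8 : ℝ)) := by
  have hn' : (1 : ℝ) ≤ n := by exact_mod_cast hn
  set m := logb 2 n
  have hm : 0 ≤ m := logb_nonneg one_lt_two hn'
  have hlog : log n = m * log 2 := (div_mul_cancel₀ _ (log_pos one_lt_two).ne').symm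
  calc exp (-log 2 * (2 * m)) * (1 + m / n) ^ n
      ≤ exp (-log 2 * (2 * m)) * exp m := by
        gcongr
        have := one_sub_div_pow_le_exp_neg (n := n) (t := -m) (by linarith)
        rwa [neg_div, sub_neg_eq_add, neg_neg] at this
    _ = exp (m * (1 - 2 * log 2)) := by rw [← exp_add]; ring_nf
    _ ≤ exp (-(3 / 8) * log n) := by
        rw [exp_le_exp, hlog]
        nlinarith [log_two_gt_d9]
    _ = (n : ℝ) ^ (-(3 / 8 : ℝ)) := by
        rw [rpow_def_of_pos (by linarith), mul_comm]

theorem chernoff_log_interval_general {Ω : Type*} [MeasurableSpace Ω] (P : Measure Ω)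
    [IsProbabilityMeasure P] (n : ℕ) (hn : 2 ≤ n)
    (X : Fin n → Ω → ℝ) (hmeas : ∀ i, Measurable (X i))
    (hindep : iIndepFun X P)
    (hunif : ∀ i, Measure.map (X i) P = volume.restrict (Set.Ico (0 : ℝ) 1))
    (a b : ℝ) (ha : 0 ≤ a) (hb : b ≤ 1) (hlen : b - a = Real.logb 2 n / n) :
    P {ω | 2 * Real.logb 2 n ≤ (Nat.card {i : Fin n // X i ω ∈ Set.Ico a b} : ℝ)} ≤
      ENNReal.ofReal ((n : ℝ) ^ (-(3 / 8 : ℝ))) := by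
  have hab : a ≤ b := by
    rw [← sub_nonneg, hlen]
    exact div_nonneg (logb_nonneg one_lt_two (Nat.one_le_cast.mpr (by omega))) n.cast_nonneg
  have hchernoff := measureReal_card_mem_ge_le hmeas hindep measurableSet_Ico
    (fun i => measureReal_preimage_Ico_of_map_eq_uniform (hmeas i) (hunif i) ha hab hb)
    (log_nonneg one_le_two) (2 * logb 2 n)
  rw [exp_log two_pos, hlen, Fintype.card_fin, show (2 : ℝ) - 1 = 1 by norm_num, one_mul]
    at hchernoff
  rw [← ofReal_measureReal]
  exact ENNReal.ofReal_le_ofReal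
    (hchernoff.trans (exp_neg_two_logb_mul_one_add_pow_le (by omega)))

/-- Probing estimate of Lemma 13: if `X_1, …, X_n` (`n ≥ 2`) are independent and uniform
on `[0,1)` and `I = [a,b) ⊆ [0,1)` has length `(log₂ n)/n ≤ 1`, then the probability that
at least `2·log₂ n` of the points lie in `I` is at most `n^(-3/8)`. -/
theorem chernoff_log_interval {Ω : Type*} [MeasurableSpace Ω] (P : Measure Ω)
    [IsProbabilityMeasure P] (n : ℕ) (hn : 2 ≤ n)
    (hlen1 : Real.logb 2 n / n ≤ 1)
    (X : Fin n → Ω → ℝ) (hmeas : ∀ i, Measurable (X i))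
    (hindep : iIndepFun X P)
    (hunif : ∀ i, Measure.map (X i) P = volume.restrict (Set.Ico (0 : ℝ) 1))
    (a b : ℝ) (ha : 0 ≤ a) (hb : b ≤ 1) (hlen : b - a = Real.logb 2 n / n) :
    P {ω | 2 * Real.logb 2 n ≤ (Nat.card {i : Fin n // X i ω ∈ Set.Ico a b} : ℝ)} ≤
      ENNReal.ofReal ((n : ℝ) ^ (-(3 / 8 : ℝ))) :=
  chernoff_log_interval_general P n hn X hmeas hindep hunif a b ha hb hlen
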